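/- arXiv:1810.06903 — 5 statements merged into one kernel-verified Lean document; each statement's English description precedes it below -/
import Mathlib

section
/- Let \(q\) be a unit quaternion and \(p\) a quaternion with \(p \cdot q = 0\) (Euclidean inner product in \(\mathbb{R}^4\)). Then for every purely imaginary quaternion \(u\), the quaternion \(p u q^* + q u p^*\) is purely imaginary, \(p q^*\) is purely imaginary, and \(p u q^* + q u p^* = 2\,(p q^*) \times (q u q^*)\), where \(\times\) denotes the cross product of the corresponding vectors of \(\mathbb{R}^3\). In other words, the differential at \(q\) of the map \(q \mapsto \Phi(q)\) applied to \(p\) equals \(2\,[p q^*]_\times \Phi(q)\). -/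
open scoped Matrix Quaternion

noncomputable section

/-- The space of real 3×3 matrices. -/
abbrev Mat3 := Matrix (Fin 3) (Fin 3) ℝ

/-- The purely imaginary quaternion associated with a vector of `ℝ³`. -/
def quatOfVec (v : Fin 3 → ℝ) : Quaternion ℝ := ⟨0, v 0, v 1, v 2⟩

/-- The vector of `ℝ³` formed by the imaginary parts of a quaternion. -/
def vecOfQuat (x : Quaternion ℝ) : Fin 3 → ℝ := ![x.imI, x.imJ, x.imK]

/-- The 3×3 real matrix of the linear map `u ↦ Im (q u q*)` on
`ℝ³ ≃ {purely imaginary quaternions}`.  For a unit quaternion `q` this is the rotation matrix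
associated with `q`. -/
def Phi (q : Quaternion ℝ) : Mat3 :=
  Matrix.of fun i j => vecOfQuat (q * quatOfVec (Pi.single j 1) * star q) i

/-- The Euclidean inner product of two quaternions, seen as vectors of `ℝ⁴`. -/
def qdot (p q : Quaternion ℝ) : ℝ :=
  p.re * q.re + p.imI * q.imI + p.imJ * q.imJ + p.imK * q.imK

/-- The vector of `ℝ⁴` of components of a quaternion. -/
def qcomp (q : Quaternion ℝ) : Fin 4 → ℝ := ![q.re, q.imI, q.imJ, q.imK]

/-- The antisymmetric matrix `[u]×` of the cross product by `u ∈ ℝ³`. -/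
def hatMap (u : Fin 3 → ℝ) : Mat3 :=
  Matrix.of ![![0, -u 2, u 1], ![u 2, 0, -u 0], ![-u 1, u 0, 0]]

private lemma cross_eq_hat_mul (w : Fin 3 → ℝ) (M : Mat3) (i j : Fin 3) :
    crossProduct w (fun k => M k j) i = (hatMap w * M) i j := by
  fin_cases i <;>
    simp [cross_apply, hatMap, Matrix.mul_apply, Fin.sum_univ_three] <;> ring

private lemma vec3_eq {a b c d e f : ℝ} (h1 : a = d) (h2 : b = e) (h3 : c = f) :
    ![a, b, c] = ![d, e, f] := by rw [h1, h2, h3]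

private lemma key_imI (q p u : Quaternion ℝ)
    (hN : q.re ^ 2 + q.imI ^ 2 + q.imJ ^ 2 + q.imK ^ 2 = 1)
    (hD : p.re * q.re + p.imI * q.imI + p.imJ * q.imJ + p.imK * q.imK = 0)
    (hu : u.re = 0) :
    (p * u * star q + q * u * star p).imI =
      2 * ((p * star q).imJ * (q * u * star q).imK
        - (p * star q).imK * (q * u * star q).imJ) := by
  simp only [Quaternion.imI_add, Quaternion.re_mul, Quaternion.imI_mul, Quaternion.imJ_mul,
    Quaternion.imK_mul, Quaternion.re_star, Quaternion.imI_star, Quaternion.imJ_star,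
    Quaternion.imK_star, hu]
  linear_combination ((2 : ℝ)*q.imK*p.imK*u.imI + (-2 : ℝ)*q.imK*p.imI*u.imK + (2 : ℝ)*q.imK*p.re*u.imJ + (2 : ℝ)*q.imJ*p.imJ*u.imI + (-2 : ℝ)*q.imJ*p.imI*u.imJ + (-2 : ℝ)*q.imJ*p.re*u.imK + (-2 : ℝ)*q.imI*p.imK*u.imK + (-2 : ℝ)*q.imI*p.imJ*u.imJ + (-2 : ℝ)*q.imI*p.imI*u.imI + (2 : ℝ)*q.re*p.imK*u.imJ + (-2 : ℝ)*q.re*p.imJ*u.imK + (-2 : ℝ)*q.re*p.re*u.imI) * hN +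
    ((-2 : ℝ)*q.imK*q.imK*u.imI + (-2 : ℝ)*q.imJ*q.imJ*u.imI + (4 : ℝ)*q.imI*q.imK*u.imK + (4 : ℝ)*q.imI*q.imJ*u.imJ + (2 : ℝ)*q.imI*q.imI*u.imI + (-4 : ℝ)*q.re*q.imK*u.imJ + (4 : ℝ)*q.re*q.imJ*u.imK + (2 : ℝ)*q.re*q.re*u.imI) * hD

private lemma key_imJ (q p u : Quaternion ℝ)
    (hN : q.re ^ 2 + q.imI ^ 2 + q.imJ ^ 2 + q.imK ^ 2 = 1)
    (hD : p.re * q.re + p.imI * q.imI + p.imJ * q.imJ + p.imK * q.imK = 0)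
    (hu : u.re = 0) :
    (p * u * star q + q * u * star p).imJ =
      2 * ((p * star q).imK * (q * u * star q).imI
        - (p * star q).imI * (q * u * star q).imK) := by
  simp only [Quaternion.imJ_add, Quaternion.re_mul, Quaternion.imI_mul, Quaternion.imJ_mul,
    Quaternion.imK_mul, Quaternion.re_star, Quaternion.imI_star, Quaternion.imJ_star,
    Quaternion.imK_star, hu]
  linear_combination ((2 : ℝ)*q.imK*p.imK*u.imJ + (-2 : ℝ)*q.imK*p.imJ*u.imK + (-2 : ℝ)*q.imK*p.re*u.imI + (-2 : ℝ)*q.imJ*p.imK*u.imK + (-2 : ℝ)*q.imJ*p.imJ*u.imJ + (-2 : ℝ)*q.imJ*p.imI*u.imI + (-2 : ℝ)*q.imI*p.imJ*u.imI + (2 : ℝ)*q.imI*p.imI*u.imJ + (2 : ℝ)*q.imI*p.re*u.imK + (-2 : ℝ)*q.re*p.imK*u.imI + (2 : ℝ)*q.re*p.imI*u.imK + (-2 : ℝ)*q.re*p.re*u.imJ) * hN +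
    ((-2 : ℝ)*q.imK*q.imK*u.imJ + (4 : ℝ)*q.imJ*q.imK*u.imK + (2 : ℝ)*q.imJ*q.imJ*u.imJ + (4 : ℝ)*q.imI*q.imJ*u.imI + (-2 : ℝ)*q.imI*q.imI*u.imJ + (4 : ℝ)*q.re*q.imK*u.imI + (-4 : ℝ)*q.re*q.imI*u.imK + (2 : ℝ)*q.re*q.re*u.imJ) * hD

private lemma key_imK (q p u : Quaternion ℝ)
    (hN : q.re ^ 2 + q.imI ^ 2 + q.imJ ^ 2 + q.imK ^ 2 = 1)
    (hD : p.re * q.re + p.imI * q.imI + p.imJ * q.imJ + p.imK * q.imK = 0)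
    (hu : u.re = 0) :
    (p * u * star q + q * u * star p).imK =
      2 * ((p * star q).imI * (q * u * star q).imJ
        - (p * star q).imJ * (q * u * star q).imI) := by
  simp only [Quaternion.imK_add, Quaternion.re_mul, Quaternion.imI_mul, Quaternion.imJ_mul,
    Quaternion.imK_mul, Quaternion.re_star, Quaternion.imI_star, Quaternion.imJ_star,
    Quaternion.imK_star, hu]
  linear_combination ((-2 : ℝ)*q.imK*p.imK*u.imK + (-2 : ℝ)*q.imK*p.imJ*u.imJ + (-2 : ℝ)*q.imK*p.imI*u.imI + (-2 : ℝ)*q.imJ*p.imK*u.imJ + (2 : ℝ)*q.imJ*p.imJ*u.imK + (2 : ℝ)*q.imJ*p.re*u.imI + (-2 : ℝ)*q.imI*p.imK*u.imI + (2 : ℝ)*q.imI*p.imI*u.imK + (-2 : ℝ)*q.imI*p.re*u.imJ + (2 : ℝ)*q.re*p.imJ*u.imI + (-2 : ℝ)*q.re*p.imI*u.imJ + (-2 : ℝ)*q.re*p.re*u.imK) * hN +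
    ((2 : ℝ)*q.imK*q.imK*u.imK + (4 : ℝ)*q.imJ*q.imK*u.imJ + (-2 : ℝ)*q.imJ*q.imJ*u.imK + (4 : ℝ)*q.imI*q.imK*u.imI + (-2 : ℝ)*q.imI*q.imI*u.imK + (-4 : ℝ)*q.re*q.imJ*u.imI + (4 : ℝ)*q.re*q.imI*u.imJ + (2 : ℝ)*q.re*q.re*u.imK) * hD

private lemma key_re (q p u : Quaternion ℝ) (hu : u.re = 0) :
    (p * u * star q + q * u * star p).re = 0 := by
  simp only [Quaternion.re_add, Quaternion.re_mul, Quaternion.imI_mul, Quaternion.imJ_mul,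
    Quaternion.imK_mul, Quaternion.re_star, Quaternion.imI_star, Quaternion.imJ_star,
    Quaternion.imK_star, hu]
  ring

/-- Let `q` be a unit quaternion and `p ⊥ q`.  Then `p q*` is purely imaginary, and for every
purely imaginary `u`, the quaternion `p u q* + q u p*` (the derivative of `q ↦ q u q*` at `q`
in the direction `p`) is purely imaginary and equals `2 (p q*) × (q u q*)`; in matrix form,
the differential of `Φ` at `q` applied to `p` is `2 [p q*]× Φ(q)`. -/
theorem differential_of_Phi (q p : Quaternion ℝ) (hq : ‖q‖ = 1) (hpq : qdot p q = 0) :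
    (p * star q).re = 0 ∧
    (∀ u : Quaternion ℝ, u.re = 0 →
      (p * u * star q + q * u * star p).re = 0 ∧
      vecOfQuat (p * u * star q + q * u * star p) =
        (2 : ℝ) • crossProduct (vecOfQuat (p * star q)) (vecOfQuat (q * u * star q))) ∧
    (Matrix.of fun i j =>
        vecOfQuat (p * quatOfVec (Pi.single j 1) * star q +
          q * quatOfVec (Pi.single j 1) * star p) i) =
      (2 : ℝ) • (hatMap (vecOfQuat (p * star q)) * Phi q) := by
  have hN : q.re ^ 2 + q.imI ^ 2 + q.imJ ^ 2 + q.imK ^ 2 = 1 := by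
    have h := Quaternion.normSq_eq_norm_mul_self (a := q)
    rw [hq, Quaternion.normSq_def'] at h
    linarith
  have hD : p.re * q.re + p.imI * q.imI + p.imJ * q.imJ + p.imK * q.imK = 0 := hpq
  have h2 : ∀ u : Quaternion ℝ, u.re = 0 →
      (p * u * star q + q * u * star p).re = 0 ∧
      vecOfQuat (p * u * star q + q * u * star p) =
        (2 : ℝ) • crossProduct (vecOfQuat (p * star q)) (vecOfQuat (q * u * star q)) := by
    intro u hu
    refine ⟨key_re q p u hu, ?_⟩
    rw [cross_apply]
    simp only [vecOfQuat, Matrix.smul_cons, smul_eq_mul, Matrix.smul_empty,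
      Matrix.cons_val_zero, Matrix.cons_val_one, Matrix.head_cons, Matrix.cons_val_two,
      Matrix.tail_cons]
    exact vec3_eq (by linear_combination key_imI q p u hN hD hu)
      (by linear_combination key_imJ q p u hN hD hu)
      (by linear_combination key_imK q p u hN hD hu)
  refine ⟨?_, h2, ?_⟩
  · simp only [Quaternion.re_mul, Quaternion.re_star, Quaternion.imI_star, Quaternion.imJ_star,
      Quaternion.imK_star]
    linear_combination hD
  · ext i j
    have h := congrFun ((h2 (quatOfVec (Pi.single j 1)) rfl).2) i
    rw [Matrix.of_apply, h, Matrix.smul_apply, Pi.smul_apply, smul_eq_mul, smul_eq_mul]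
    congr 1
    exact cross_eq_hat_mul (vecOfQuat (p * star q)) (Phi q) i j
end
end

section
/- Let \(M\) be a real 3×3 matrix with \(\det M > 0\), and let \(M = AS\) be its polar decomposition with \(A\) orthogonal and \(S\) symmetric positive definite. Then \(A \in SO_3(\mathbb{R})\), and \(A\) is the unique maximizer of the function \(B \mapsto \tfrac{1}{2}\mathrm{Tr}(B^\mathsf{T} M)\) over \(B \in SO_3(\mathbb{R})\). -/
/-! With `Q = Aᵀ B` orthogonal, `Tr (Bᵀ M) = Tr (Qᵀ S)` and `Tr (Aᵀ M) = Tr S`. Expanding,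
`Tr ((1 - Q)ᵀ S (1 - Q)) = 2 (Tr S - Tr (Qᵀ S))`, which is positive when `Q ≠ 1` since `S` is
positive definite. Finally `det A = ±1` and `det M = det A · det S` with `det S > 0` force
`det A = 1`. -/

open scoped Matrix

noncomputable section

namespace Matrix

variable {n m R : Type*} [Fintype n] [Fintype m]

theorem PosDef.trace_transpose_mul_mul_pos {S : Matrix n n ℝ} (hS : S.PosDef)
    {N : Matrix n m ℝ} (hN : N ≠ 0) : 0 < (Nᵀ * S * N).trace := by
  have hpsd : (Nᵀ * S * N).PosSemidef := by
    simpa using hS.posSemidef.conjTranspose_mul_mul_same N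
  refine hpsd.trace_nonneg.lt_of_ne' fun htr => hN ?_
  have hzero : Nᵀ * S * N = 0 := hpsd.trace_eq_zero_iff.mp htr
  refine ext_iff_mulVec.mpr fun v => ?_
  rw [zero_mulVec]
  by_contra hNv
  have hquad : N *ᵥ v ⬝ᵥ (S *ᵥ (N *ᵥ v)) = v ⬝ᵥ ((Nᵀ * S * N) *ᵥ v) := by
    rw [← mulVec_mulVec, ← mulVec_mulVec, dotProduct_mulVec v, vecMul_transpose]
  have hpos := hS.dotProduct_mulVec_pos hNv
  rw [star_trivial, hquad, hzero, zero_mulVec, dotProduct_zero] at hpos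
  exact hpos.false

theorem trace_transpose_one_sub_mul_mul_one_sub [DecidableEq n] [CommRing R]
    {S Q : Matrix n n R} (hS : Sᵀ = S) (hQ : Q * Qᵀ = 1) :
    ((1 - Q)ᵀ * S * (1 - Q)).trace = 2 * (S.trace - (Qᵀ * S).trace) := by
  have hcycle : (Qᵀ * S * Q).trace = S.trace := by rw [trace_mul_cycle, hQ, one_mul]
  have hswap : (S * Q).trace = (Qᵀ * S).trace := by
    rw [← trace_transpose, transpose_mul, hS]
  simp only [transpose_sub, transpose_one, sub_mul, mul_sub, one_mul, mul_one, trace_sub, hcycle,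
    hswap]
  ring

theorem PosDef.trace_transpose_mul_lt_trace [DecidableEq n] {S Q : Matrix n n ℝ}
    (hS : S.PosDef) (hQ : Q * Qᵀ = 1) (hQ1 : Q ≠ 1) : (Qᵀ * S).trace < S.trace := by
  have hpos := hS.trace_transpose_mul_mul_pos (sub_ne_zero.mpr hQ1.symm)
  have hSsymm : Sᵀ = S := (isHermitian_iff_isSymm.mp hS.isHermitian).eq
  rw [trace_transpose_one_sub_mul_mul_one_sub hSsymm hQ] at hpos
  linarith

theorem det_eq_one_of_transpose_mul_self_of_det_pos [DecidableEq n] [CommRing R] [LinearOrder R]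
    [IsStrictOrderedRing R] {A : Matrix n n R} (hA : Aᵀ * A = 1) (hdet : 0 < A.det) :
    A.det = 1 := by
  have hsq : A.det * A.det = 1 := by simpa [det_transpose] using congrArg det hA
  nlinarith

end Matrix

/-- If `det M > 0` and `M = A S` is the polar decomposition of `M` (`A` orthogonal, `S`
symmetric positive definite), then `A ∈ SO₃(ℝ)` and `A` is the unique maximizer of
`B ↦ ½ Tr(Bᵀ M)` over `SO₃(ℝ)`. -/
theorem polar_factor_is_unique_maximizer (M A S : Mat3) (hdet : 0 < M.det)
    (hA : Aᵀ * A = 1) (hS : Sᵀ = S)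
    (hSpos : ∀ x : Fin 3 → ℝ, x ≠ 0 → 0 < x ⬝ᵥ (S *ᵥ x)) (hM : M = A * S) :
    (Aᵀ * A = 1 ∧ A.det = 1) ∧
    (∀ B : Mat3, Bᵀ * B = 1 → B.det = 1 → B ≠ A →
      (1 / 2 : ℝ) * Matrix.trace (Bᵀ * M) < (1 / 2 : ℝ) * Matrix.trace (Aᵀ * M)) := by
  have hSpd : S.PosDef :=
    .of_dotProduct_mulVec_pos (Matrix.isHermitian_iff_isSymm.mpr hS) hSpos
  have hdetA : 0 < A.det := by
    rw [hM, Matrix.det_mul] at hdet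
    exact pos_of_mul_pos_left hdet hSpd.det_pos.le
  refine ⟨⟨hA, Matrix.det_eq_one_of_transpose_mul_self_of_det_pos hA hdetA⟩, fun B hB _ hBA => ?_⟩
  have hQ : (Aᵀ * B) * (Aᵀ * B)ᵀ = 1 := by
    rw [Matrix.transpose_mul, Matrix.transpose_transpose, mul_assoc, ← mul_assoc B,
      mul_eq_one_comm.mp hB, one_mul, hA]
  have hQ1 : Aᵀ * B ≠ 1 := fun h => hBA <| by
    rw [← one_mul B, ← mul_eq_one_comm.mp hA, mul_assoc, h, mul_one]
  have hlt := hSpd.trace_transpose_mul_lt_trace hQ hQ1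
  rw [Matrix.transpose_mul, Matrix.transpose_transpose, mul_assoc] at hlt
  rw [hM, ← mul_assoc Aᵀ, hA, one_mul]
  linarith
end
end

section
/- Let \(q_1, \dots, q_N\) be unit quaternions and \(w_1, \dots, w_N \ge 0\) be weights. Set \(J = \sum_{m=1}^N w_m \Phi(q_m)\) (a real 3×3 matrix) and \(Q = \sum_{m=1}^N w_m \big(q_m \otimes q_m - \tfrac{1}{4} I_4\big)\) (a real symmetric trace-free 4×4 matrix). Assume \(\det J > 0\), and let \(\bar q\) be any unit eigenvector of \(Q\) associated with its maximal eigenvalue. Then \(\Phi(\bar q) = \mathrm{PD}(J)\), the orthogonal factor in the polar decomposition of \(J\). -/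
open scoped Matrix Quaternion

noncomputable section

/-!
For unit quaternions `p` and `r`, `tr (Φ(p)ᵀ Φ(r)) = 4 (p · r)² - 1 = 4 pᵀ (r ⊗ r - I₄ / 4) p`;
summing with the weights, `tr (Φ(p)ᵀ J) = 4 pᵀ Q p`. By the Rayleigh bound this is at most `4 λ`,
with equality at `p = q̄`. Every rotation is some `Φ(p)`, in particular the polar factor `A`
(it has determinant `1` because `det J > 0`), so `tr S = tr (Aᵀ J) ≤ tr (Φ(q̄)ᵀ A S)`. Finally,
for an orthogonal `O` and `N = 1 - O` one has `N Nᵀ = N + Nᵀ`, whence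
`tr (Nᵀ S N) = 2 (tr S - tr (O S))`; with `S` positive definite, `tr S ≤ tr (O S)` forces
`N = 0`. Applied to `O = Φ(q̄)ᵀ A` this gives `Φ(q̄) = A`.
-/

open Matrix Quaternion

lemma exists_vecMulVec_self_eq {n : Type*} {K : Matrix n n ℝ} {k : n} (hk : 0 < K k k)
    (hK : ∀ i j, K i k * K j k = K i j * K k k) : ∃ v : n → ℝ, vecMulVec v v = K := by
  refine ⟨fun i => K i k / √(K k k), ?_⟩
  ext i j
  rw [vecMulVec_apply, div_mul_div_comm, Real.mul_self_sqrt hk.le, hK,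
    mul_div_cancel_right₀ _ hk.ne']

section LinearAlgebra

variable {n : Type*} [Fintype n] [DecidableEq n]

lemma det_eq_one_of_transpose_mul_self_eq_one_of_pos {A : Matrix n n ℝ} (hA : Aᵀ * A = 1)
    (hdet : 0 < A.det) : A.det = 1 := by
  have h := congrArg det hA
  rw [det_mul, det_transpose, det_one, mul_self_eq_one_iff] at h
  exact h.resolve_right (by linarith)

lemma adjugate_eq_transpose {A : Matrix n n ℝ} (hA : Aᵀ * A = 1) (hdet : A.det = 1) :
    A.adjugate = Aᵀ := by
  rw [← inv_eq_left_inv hA, Matrix.inv_def, hdet, Ring.inverse_one, one_smul]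

lemma dotProduct_mulVec_le_mul_dotProduct {Q : Matrix n n ℝ} (hQ : Q.IsHermitian) {lam : ℝ}
    (hmax : ∀ (c : ℝ) (x : n → ℝ), x ≠ 0 → Q *ᵥ x = c • x → c ≤ lam) (x : n → ℝ) :
    x ⬝ᵥ (Q *ᵥ x) ≤ lam * (x ⬝ᵥ x) := by
  have heig (i : n) : hQ.eigenvalues i ≤ lam := by
    refine hmax _ _ ?_ (hQ.mulVec_eigenvectorBasis i)
    simpa using hQ.eigenvectorBasis.orthonormal.ne_zero i
  have hpsd : (lam • 1 - Q).PosSemidef := by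
    rw [posSemidef_iff_isHermitian_and_spectrum_nonneg]
    refine ⟨(isHermitian_one.smul (.all lam)).sub hQ, ?_⟩
    rw [← Algebra.algebraMap_eq_smul_one, ← spectrum.singleton_sub_eq,
      hQ.spectrum_real_eq_range_eigenvalues]
    rintro _ ⟨_, rfl, _, ⟨i, rfl⟩, rfl⟩
    exact sub_nonneg.mpr (heig i)
  simpa [sub_mulVec, dotProduct_sub, smul_mulVec] using hpsd.dotProduct_mulVec_nonneg x

lemma eq_one_of_trace_le_trace_mul {O S : Matrix n n ℝ} (hO : O * Oᵀ = 1) (hS : S.PosDef)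
    (h : S.trace ≤ (O * S).trace) : O = 1 := by
  set N := 1 - O
  have hNSN : (Nᵀ * S * N).PosSemidef := hS.posSemidef.conjTranspose_mul_mul_same N
  have htrace : (Nᵀ * S * N).trace ≤ 0 := by
    have hN : N * Nᵀ = N + Nᵀ := by
      simp only [N, transpose_sub, transpose_one, sub_mul, mul_sub, one_mul, mul_one, hO]
      abel
    have hNS : (Nᵀ * S).trace = (N * S).trace := by
      rw [← trace_transpose, transpose_mul, transpose_transpose,
        ← conjTranspose_eq_transpose_of_trivial, hS.isHermitian.eq, trace_mul_comm]
    rw [trace_mul_cycle, hN, add_mul, trace_add, hNS]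
    simp only [N, sub_mul, one_mul, trace_sub]
    linarith
  have hzero : Nᵀ * S * N = 0 := hNSN.trace_eq_zero_iff.mp (le_antisymm htrace hNSN.trace_nonneg)
  have hNx (x : n → ℝ) : N *ᵥ x = 0 := by
    by_contra hx
    have hquad : x ⬝ᵥ ((Nᵀ * S * N) *ᵥ x) = (N *ᵥ x) ⬝ᵥ (S *ᵥ (N *ᵥ x)) := by
      rw [← mulVec_mulVec, ← mulVec_mulVec, dotProduct_mulVec, vecMul_transpose]
    have hpos := hS.dotProduct_mulVec_pos hx
    rw [star_trivial, ← hquad, hzero, zero_mulVec, dotProduct_zero] at hpos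
    exact lt_irrefl 0 hpos
  have hN : N = 0 := ext_iff_mulVec.mpr fun x => by rw [hNx, zero_mulVec]
  exact (sub_eq_zero.mp hN).symm

lemma transpose_mul_mul_transpose_eq_one {X Y : Matrix n n ℝ} (hX : Xᵀ * X = 1)
    (hY : Y * Yᵀ = 1) : Xᵀ * Y * (Xᵀ * Y)ᵀ = 1 := by
  rw [transpose_mul, transpose_transpose, Matrix.mul_assoc, ← Matrix.mul_assoc Y, hY, one_mul, hX]

end LinearAlgebra

lemma Phi_eq (q : Quaternion ℝ) : Phi q =
    !![q.re ^ 2 + q.imI ^ 2 - q.imJ ^ 2 - q.imK ^ 2, 2 * (q.imI * q.imJ - q.re * q.imK),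
        2 * (q.imI * q.imK + q.re * q.imJ);
      2 * (q.imI * q.imJ + q.re * q.imK), q.re ^ 2 - q.imI ^ 2 + q.imJ ^ 2 - q.imK ^ 2,
        2 * (q.imJ * q.imK - q.re * q.imI);
      2 * (q.imI * q.imK - q.re * q.imJ), 2 * (q.imJ * q.imK + q.re * q.imI),
        q.re ^ 2 - q.imI ^ 2 - q.imJ ^ 2 + q.imK ^ 2] := by
  ext i j
  fin_cases i <;> fin_cases j <;>
    simp only [Phi, vecOfQuat, re_mul, imI_mul, imJ_mul, imK_mul, re_star, imI_star, imJ_star,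
      imK_star, of_apply, cons_val', cons_val_zero, cons_val_one, cons_val, cons_val_fin_one,
      Fin.isValue, Fin.zero_eta, Fin.mk_one, Fin.reduceFinMk] <;>
    simp only [quatOfVec, Pi.single_eq_same, Pi.single_eq_of_ne, ne_eq, Fin.reduceEq, one_ne_zero,
      zero_ne_one, not_false_eq_true, Fin.isValue] <;>
    ring

lemma Phi_star (q : Quaternion ℝ) : Phi (star q) = (Phi q)ᵀ := by
  rw [Phi_eq, Phi_eq]
  ext i j
  fin_cases i <;> fin_cases j <;>
    simp only [re_star, imI_star, imJ_star, imK_star, transpose_apply, of_apply, cons_val',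
      cons_val_zero, cons_val_one, cons_val, cons_val_fin_one, Fin.isValue, Fin.zero_eta,
      Fin.mk_one, Fin.reduceFinMk] <;>
    ring

lemma trace_transpose_Phi_mul_Phi (p r : Quaternion ℝ) :
    ((Phi p)ᵀ * Phi r).trace = 4 * qdot p r ^ 2 - normSq p * normSq r := by
  rw [← Phi_star, Phi_eq, Phi_eq, mul_fin_three, trace_fin_three_of, qdot, normSq_def',
    normSq_def']
  simp only [re_star, imI_star, imJ_star, imK_star]
  ring

lemma transpose_Phi_mul_self {q : Quaternion ℝ} (hq : normSq q = 1) : (Phi q)ᵀ * Phi q = 1 := by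
  rw [normSq_def'] at hq
  rw [← Phi_star, Phi_eq, Phi_eq, mul_fin_three]
  ext i j
  fin_cases i <;> fin_cases j <;>
    simp only [re_star, imI_star, imJ_star, imK_star, one_apply, Fin.reduceEq, reduceIte,
      of_apply, cons_val', cons_val_zero, cons_val_one, cons_val, cons_val_fin_one, Fin.isValue,
      Fin.zero_eta, Fin.mk_one, Fin.reduceFinMk] <;>
    grind

lemma Phi_eq_of_transpose_Phi_mul_eq_one {p r : Quaternion ℝ} (hp : normSq p = 1)
    (h : (Phi p)ᵀ * Phi r = 1) : Phi p = Phi r :=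
  left_inv_eq_right_inv (mul_eq_one_comm.mp (transpose_Phi_mul_self hp)) h

lemma qdot_comm (p r : Quaternion ℝ) : qdot p r = qdot r p := by
  rw [qdot, qdot]
  ring

lemma qcomp_dotProduct_qcomp (p r : Quaternion ℝ) : qcomp p ⬝ᵥ qcomp r = qdot p r := by
  simp [qcomp, qdot, dotProduct, Fin.sum_univ_four]

lemma qcomp_dotProduct_self (p : Quaternion ℝ) : qcomp p ⬝ᵥ qcomp p = normSq p := by
  rw [qcomp_dotProduct_qcomp, qdot, normSq_def']
  ring

def qTensor (r : Quaternion ℝ) : Matrix (Fin 4) (Fin 4) ℝ :=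
  vecMulVec (qcomp r) (qcomp r) - (1 / 4 : ℝ) • 1

lemma isHermitian_qTensor (r : Quaternion ℝ) : (qTensor r).IsHermitian :=
  (posSemidef_vecMulVec_self_star (qcomp r)).isHermitian.sub (isHermitian_one.smul (.all _))

lemma qcomp_dotProduct_qTensor_mulVec {p : Quaternion ℝ} (hp : normSq p = 1) (r : Quaternion ℝ) :
    qcomp p ⬝ᵥ (qTensor r *ᵥ qcomp p) = qdot p r ^ 2 - 1 / 4 := by
  rw [qTensor, sub_mulVec, vecMulVec_mulVec, smul_mulVec, one_mulVec, dotProduct_sub]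
  rw [dotProduct_smul, dotProduct_smul, op_smul_eq_smul, qcomp_dotProduct_self, hp,
    qcomp_dotProduct_qcomp, qcomp_dotProduct_qcomp, qdot_comm r p, smul_eq_mul, smul_eq_mul]
  ring

lemma trace_transpose_Phi_mul_Phi_eq_qTensor {p r : Quaternion ℝ} (hp : normSq p = 1)
    (hr : normSq r = 1) :
    ((Phi p)ᵀ * Phi r).trace = 4 * (qcomp p ⬝ᵥ (qTensor r *ᵥ qcomp p)) := by
  rw [trace_transpose_Phi_mul_Phi, qcomp_dotProduct_qTensor_mulVec hp, hp, hr]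
  ring

lemma trace_transpose_Phi_mul_sum {ι : Type*} [Fintype ι] {p : Quaternion ℝ}
    (hp : normSq p = 1) {q : ι → Quaternion ℝ} (hq : ∀ m, normSq (q m) = 1) (w : ι → ℝ) :
    ((Phi p)ᵀ * ∑ m, w m • Phi (q m)).trace =
      4 * (qcomp p ⬝ᵥ ((∑ m, w m • qTensor (q m)) *ᵥ qcomp p)) := by
  simp only [Finset.mul_sum, trace_sum, Matrix.mul_smul, trace_smul, sum_mulVec, smul_mulVec,
    dotProduct_sum, dotProduct_smul, smul_eq_mul]
  refine Finset.sum_congr rfl fun m _ => ?_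
  rw [trace_transpose_Phi_mul_Phi_eq_qTensor hp (hq m)]
  ring

/-- For `A = Phi q` with `normSq q = 1` this matrix is `q ⊗ q`: its entries are the quadratic
monomials in the components of `q`, read off linearly from the entries of `Phi q`. -/
def rotationQuatMatrix (A : Mat3) : Matrix (Fin 4) (Fin 4) ℝ :=
  (1 / 4 : ℝ) • !![1 + A 0 0 + A 1 1 + A 2 2, A 2 1 - A 1 2, A 0 2 - A 2 0, A 1 0 - A 0 1;
    A 2 1 - A 1 2, 1 + A 0 0 - A 1 1 - A 2 2, A 0 1 + A 1 0, A 0 2 + A 2 0;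
    A 0 2 - A 2 0, A 0 1 + A 1 0, 1 - A 0 0 + A 1 1 - A 2 2, A 1 2 + A 2 1;
    A 1 0 - A 0 1, A 0 2 + A 2 0, A 1 2 + A 2 1, 1 - A 0 0 - A 1 1 + A 2 2]

lemma trace_rotationQuatMatrix (A : Mat3) : (rotationQuatMatrix A).trace = 1 := by
  simp only [trace, diag_apply, Fin.sum_univ_four, rotationQuatMatrix, Matrix.smul_apply,
    smul_eq_mul, of_apply, cons_val', cons_val_zero, cons_val_one, cons_val, cons_val_fin_one,
    Fin.isValue]
  ring

/-- `rotationQuatMatrix A` has rank one when `A` is a rotation. The identities are polynomial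
consequences of the orthogonality relations and of the cofactor relations `adjugate A = Aᵀ`. -/
lemma rotationQuatMatrix_mul_eq {A : Mat3} (hA : Aᵀ * A = 1) (hdet : A.det = 1) (i j k : Fin 4) :
    rotationQuatMatrix A i k * rotationQuatMatrix A j k =
      rotationQuatMatrix A i j * rotationQuatMatrix A k k := by
  have hA' : A * Aᵀ = 1 := mul_eq_one_comm.mp hA
  have hadj := adjugate_eq_transpose hA hdet
  rw [← ext_iff] at hA hA' hadj
  simp only [Fin.forall_fin_succ, mul_apply, transpose_apply, Fin.sum_univ_three, one_apply,
    adjugate_fin_three, Fin.succ_zero_eq_one, Fin.succ_one_eq_two, IsEmpty.forall_iff, and_true,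
    reduceIte, Fin.reduceEq, Fin.succ_ne_zero, cons_val_succ, of_apply, cons_val',
    cons_val_zero, cons_val_fin_one, Fin.isValue] at hA hA' hadj
  fin_cases i <;> fin_cases j <;> fin_cases k <;>
    simp only [rotationQuatMatrix, Matrix.smul_apply, smul_eq_mul, of_apply, cons_val',
      cons_val_zero, cons_val_one, cons_val, cons_val_fin_one, Fin.isValue, Fin.zero_eta,
      Fin.mk_one, Fin.reduceFinMk] <;>
    grind

lemma normSq_eq_one_and_Phi_eq_of_vecMulVec {p : Quaternion ℝ} {A : Mat3}
    (h : vecMulVec (qcomp p) (qcomp p) = rotationQuatMatrix A) : normSq p = 1 ∧ Phi p = A := by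
  rw [← ext_iff] at h
  simp only [Fin.forall_fin_succ, vecMulVec_apply, qcomp, rotationQuatMatrix, Matrix.smul_apply,
    smul_eq_mul, cons_val_succ, forall_const, of_apply, cons_val',
    cons_val_zero, cons_val_fin_one, Fin.isValue] at h
  refine ⟨by rw [normSq_def']; linarith, ?_⟩
  rw [Phi_eq]
  ext i j
  fin_cases i <;> fin_cases j <;>
    simp only [of_apply, cons_val', cons_val_zero, cons_val_one, cons_val, cons_val_fin_one,
      Fin.isValue, Fin.zero_eta, Fin.mk_one, Fin.reduceFinMk] <;>
    linarith

lemma exists_Phi_eq {A : Mat3} (hA : Aᵀ * A = 1) (hdet : A.det = 1) :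
    ∃ p : Quaternion ℝ, normSq p = 1 ∧ Phi p = A := by
  have htrace : ∑ k, rotationQuatMatrix A k k = 1 := trace_rotationQuatMatrix A
  obtain ⟨k, -, hk⟩ : ∃ k ∈ Finset.univ, (0 : ℝ) < rotationQuatMatrix A k k :=
    Finset.exists_lt_of_sum_lt (by simp [htrace])
  obtain ⟨v, hv⟩ := exists_vecMulVec_self_eq hk (rotationQuatMatrix_mul_eq hA hdet · · k)
  have hqcomp : qcomp ⟨v 0, v 1, v 2, v 3⟩ = v := by
    ext i
    fin_cases i <;> rfl
  exact ⟨_, normSq_eq_one_and_Phi_eq_of_vecMulVec (hqcomp ▸ hv)⟩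

theorem averaging_equivalence_general (N : ℕ) (q : Fin N → Quaternion ℝ) (hq : ∀ m, ‖q m‖ = 1)
    (w : Fin N → ℝ)
    (J : Mat3) (hJ : J = ∑ m, w m • Phi (q m))
    (Q : Matrix (Fin 4) (Fin 4) ℝ)
    (hQ : Q = ∑ m, w m •
      (Matrix.vecMulVec (qcomp (q m)) (qcomp (q m)) -
        (1 / 4 : ℝ) • (1 : Matrix (Fin 4) (Fin 4) ℝ)))
    (hdet : 0 < J.det)
    (qbar : Quaternion ℝ) (hqbar : ‖qbar‖ = 1) (lam : ℝ)
    (heig : Q *ᵥ qcomp qbar = lam • qcomp qbar)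
    (hmax : ∀ (c : ℝ) (x : Fin 4 → ℝ), x ≠ 0 → Q *ᵥ x = c • x → c ≤ lam) :
    ∀ A S : Mat3, Aᵀ * A = 1 → Sᵀ = S →
      (∀ x : Fin 3 → ℝ, x ≠ 0 → 0 < x ⬝ᵥ (S *ᵥ x)) → J = A * S →
      Phi qbar = A := by
  intro A S hA hS hSpos hJAS
  replace hq m : normSq (q m) = 1 := by rw [normSq_eq_norm_mul_self, hq m, one_mul]
  replace hqbar : normSq qbar = 1 := by rw [normSq_eq_norm_mul_self, hqbar, one_mul]
  replace hQ : Q = ∑ m, w m • qTensor (q m) := hQ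
  have hSpd : S.PosDef := posDef_iff_dotProduct_mulVec.mpr
    ⟨by rwa [IsHermitian, conjTranspose_eq_transpose_of_trivial], fun x hx => hSpos x hx⟩
  obtain ⟨p, hp, rfl⟩ := exists_Phi_eq hA <| det_eq_one_of_transpose_mul_self_eq_one_of_pos hA <|
    pos_of_mul_pos_left (det_mul A S ▸ hJAS ▸ hdet) hSpd.det_pos.le
  have hQsymm : Q.IsHermitian := hQ ▸ isSelfAdjoint_sum _ fun m _ =>
    ((isHermitian_qTensor (q m)).smul (.all (w m))).isSelfAdjoint
  have hle : S.trace ≤ ((Phi qbar)ᵀ * Phi p * S).trace :=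
    calc S.trace = ((Phi p)ᵀ * J).trace := by rw [hJAS, ← Matrix.mul_assoc, hA, one_mul]
      _ = 4 * (qcomp p ⬝ᵥ (Q *ᵥ qcomp p)) := by rw [hJ, trace_transpose_Phi_mul_sum hp hq, hQ]
      _ ≤ 4 * lam := by
        simpa [qcomp_dotProduct_self, hp] using
          dotProduct_mulVec_le_mul_dotProduct hQsymm hmax (qcomp p)
      _ = 4 * (qcomp qbar ⬝ᵥ (Q *ᵥ qcomp qbar)) := by
        rw [heig, dotProduct_smul, qcomp_dotProduct_self, hqbar, smul_eq_mul, mul_one]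
      _ = ((Phi qbar)ᵀ * Phi p * S).trace := by
        rw [Matrix.mul_assoc, ← hJAS, hJ, trace_transpose_Phi_mul_sum hqbar hq, hQ]
  have hO := transpose_mul_mul_transpose_eq_one (transpose_Phi_mul_self hqbar)
    (mul_eq_one_comm.mp (transpose_Phi_mul_self hp))
  exact Phi_eq_of_transpose_Phi_mul_eq_one hqbar (eq_one_of_trace_le_trace_mul hO hSpd hle)

/-- Averaging of rotations: equivalence of the polar-decomposition procedure (on the weighted
average `J` of rotation matrices) and the maximal-eigenvector procedure (on the weighted
average `Q` of Q-tensors).  If `det J > 0` and `q̄` is a unit eigenvector of `Q` for its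
maximal eigenvalue, then `Φ(q̄) = PD(J)`, the orthogonal factor of the polar decomposition
of `J`. -/
theorem averaging_equivalence (N : ℕ) (q : Fin N → Quaternion ℝ) (hq : ∀ m, ‖q m‖ = 1)
    (w : Fin N → ℝ) (hw : ∀ m, 0 ≤ w m)
    (J : Mat3) (hJ : J = ∑ m, w m • Phi (q m))
    (Q : Matrix (Fin 4) (Fin 4) ℝ)
    (hQ : Q = ∑ m, w m •
      (Matrix.vecMulVec (qcomp (q m)) (qcomp (q m)) -
        (1 / 4 : ℝ) • (1 : Matrix (Fin 4) (Fin 4) ℝ)))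
    (hdet : 0 < J.det)
    (qbar : Quaternion ℝ) (hqbar : ‖qbar‖ = 1) (lam : ℝ)
    (heig : Q *ᵥ qcomp qbar = lam • qcomp qbar)
    (hmax : ∀ (c : ℝ) (x : Fin 4 → ℝ), x ≠ 0 → Q *ᵥ x = c • x → c ≤ lam) :
    ∀ A S : Mat3, Aᵀ * A = 1 → Sᵀ = S →
      (∀ x : Fin 3 → ℝ, x ≠ 0 → 0 < x ⬝ᵥ (S *ᵥ x)) → J = A * S →
      Phi qbar = A :=
  averaging_equivalence_general N q hq w J hJ Q hQ hdet qbar hqbar lam heig hmax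
end
end

section
/- Fix \(D > 0\). There exists a constant \(c_1 \in (0, 1)\), depending only on \(D\), such that for every \(\Lambda \in SO_3(\mathbb{R})\), \(\int_{SO_3(\mathbb{R})} A\,M_\Lambda(A)\,\mathrm{d}\mu(A) = c_1\,\Lambda\), where \(\mu\) is the Haar probability measure on \(SO_3(\mathbb{R})\) and the integral of the matrix-valued function is taken entrywise. -/
open scoped Matrix
open MeasureTheory

noncomputable section

/-- The special orthogonal group `SO₃(ℝ)`. -/
def SO3T : Type := {A : Mat3 // Aᵀ * A = 1 ∧ A.det = 1}

namespace SO3T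

instance : Group SO3T where
  mul A B := ⟨A.1 * B.1, by
    obtain ⟨hA1, hA2⟩ := A.2
    obtain ⟨hB1, hB2⟩ := B.2
    constructor
    · rw [Matrix.transpose_mul, Matrix.mul_assoc, ← Matrix.mul_assoc (A.1)ᵀ, hA1,
        Matrix.one_mul, hB1]
    · rw [Matrix.det_mul, hA2, hB2, mul_one]⟩
  one := ⟨1, by simp⟩
  inv A := ⟨A.1ᵀ, by
    obtain ⟨hA1, hA2⟩ := A.2
    constructor
    · rw [Matrix.transpose_transpose]; exact mul_eq_one_comm.mp hA1
    · rw [Matrix.det_transpose]; exact hA2⟩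
  mul_assoc a b c := Subtype.ext (mul_assoc a.1 b.1 c.1)
  one_mul a := Subtype.ext (one_mul a.1)
  mul_one a := Subtype.ext (mul_one a.1)
  inv_mul_cancel a := Subtype.ext a.2.1

instance : TopologicalSpace SO3T := instTopologicalSpaceSubtype

instance : MeasurableSpace SO3T := borel SO3T

instance : BorelSpace SO3T := ⟨rfl⟩

end SO3T

/-!
With `κ = 1 / (2D)`, left invariance of `μ` turns the flux at `Λ` into `Λ M / Z`, where
`M = ∫ exp(κ tr A) A dμ(A)` is the first moment at `Λ = 1`. A left-invariant probability measure
on a compact group is also right invariant, and `tr` is a class function, so `M` commutes with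
every rotation; two quarter-turns about different axes already force `M = c I`. Taking traces,
`3c = ∫ exp(κ tr A) tr A dμ`. This is positive because `∫ tr A dμ = 0` and
`(exp(κ t) - 1) t ≥ 0`, and it is less than `3Z` because `tr A ≤ 3` with strict inequality near a
quarter-turn. Hence `c₁ = c / Z`.
-/

section CompactGroup

variable {G : Type*} [Group G] [TopologicalSpace G] [IsTopologicalGroup G] [CompactSpace G]
  [MeasurableSpace G] [BorelSpace G] (μ : Measure G) [IsProbabilityMeasure μ]
  [μ.IsMulLeftInvariant]

lemma isHaarMeasure_of_isProbabilityMeasure : μ.IsHaarMeasure :=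
  have := isOpenPosMeasure_of_mulLeftInvariant_of_compact (μ := μ) Set.univ isCompact_univ
    (by simp)
  ⟨⟩

lemma isMulRightInvariant_of_isProbabilityMeasure : μ.IsMulRightInvariant := by
  have := isHaarMeasure_of_isProbabilityMeasure μ
  refine ⟨fun g => ?_⟩
  have : IsProbabilityMeasure (μ.map (· * g)) :=
    Measure.isProbabilityMeasure_map (measurable_mul_const g).aemeasurable
  have := isHaarMeasure_of_isProbabilityMeasure (μ.map (· * g))
  exact Measure.isHaarMeasure_eq_of_isProbabilityMeasure _ μ

end CompactGroup

section Conj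

variable {G : Type*} [Group G] [MeasurableSpace G] [MeasurableMul G] {μ : Measure G}
  [μ.IsMulLeftInvariant] [μ.IsMulRightInvariant] {E : Type*} [NormedAddCommGroup E]
  [NormedSpace ℝ E]

lemma integral_conj_eq_self (f : G → E) (g : G) :
    ∫ x, f (g * x * g⁻¹) ∂μ = ∫ x, f x ∂μ := by
  simp_rw [mul_assoc]
  rw [integral_mul_right_eq_self (fun x => f (g * x)), integral_mul_left_eq_self]

end Conj

lemma Continuous.integrable_of_compactSpace {X E : Type*} [TopologicalSpace X] [CompactSpace X]
    [MeasurableSpace X] [OpensMeasurableSpace X] {μ : Measure X} [IsFiniteMeasure μ]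
    [NormedAddCommGroup E] {f : X → E} (hf : Continuous f) : Integrable f μ :=
  hf.integrable_of_hasCompactSupport (.of_compactSpace f)

lemma Matrix.mul_mul_apply_eq_sum {l m n o R : Type*} [Fintype m] [Fintype n] [CommSemiring R]
    (M : Matrix l m R) (X : Matrix m n R) (N : Matrix n o R) (i : l) (j : o) :
    (M * X * N) i j = ∑ k, ∑ k', M i k * N k' j * X k k' := by
  simp only [Matrix.mul_apply, Finset.sum_mul]
  rw [Finset.sum_comm]
  exact Finset.sum_congr rfl fun _ _ => Finset.sum_congr rfl fun _ _ => by ring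

open Matrix in
lemma Matrix.eq_smul_one_of_commute_rotations (M : Mat3)
    (hrotZ : Commute !![0, -1, 0; 1, 0, 0; 0, 0, 1] M)
    (hrotX : Commute !![1, 0, 0; 0, 0, -1; 0, 1, 0] M) :
    M = M 0 0 • 1 := by
  rw [Commute, SemiconjBy, eta_fin_three M, mul_fin_three, mul_fin_three] at hrotZ hrotX
  simp only [Fin.isValue, zero_mul, neg_mul, one_mul, zero_add, add_zero, mul_zero, mul_one, mul_neg,
    EmbeddingLike.apply_eq_iff_eq, vecCons_inj, neg_inj, and_true, true_and] at hrotZ hrotX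
  obtain ⟨⟨-, h11, -⟩, ⟨-, h01, h02⟩, h20, h21⟩ := hrotZ
  obtain ⟨⟨-, h02'⟩, ⟨-, -, h22⟩, h10, -, h12⟩ := hrotX
  ext i j
  fin_cases i <;> fin_cases j <;> simp <;> linarith

lemma Real.exp_mul_sub_one_mul_nonneg {κ : ℝ} (hκ : 0 ≤ κ) (t : ℝ) :
    0 ≤ (Real.exp (κ * t) - 1) * t := by
  rcases le_total 0 t with ht | ht
  · exact mul_nonneg (sub_nonneg.2 (Real.one_le_exp (mul_nonneg hκ ht))) ht
  · exact mul_nonneg_of_nonpos_of_nonpos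
      (sub_nonpos.2 (Real.exp_le_one_iff.2 (mul_nonpos_of_nonneg_of_nonpos hκ ht))) ht

namespace SO3T

@[simp] lemma val_mul (A B : SO3T) : (A * B).val = A.val * B.val := rfl
@[simp] lemma val_one : (1 : SO3T).val = 1 := rfl
@[simp] lemma val_inv (A : SO3T) : A⁻¹.val = A.valᵀ := rfl

lemma continuous_val : Continuous (fun A : SO3T => A.val) := continuous_subtype_val

instance : IsTopologicalGroup SO3T where
  continuous_mul := Continuous.subtype_mk
    ((continuous_val.comp continuous_fst).matrix_mul (continuous_val.comp continuous_snd)) _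
  continuous_inv := Continuous.subtype_mk continuous_val.matrix_transpose _

lemma abs_val_apply_le_one (A : SO3T) (i j : Fin 3) : |A.val i j| ≤ 1 := by
  have hA : A.val ∈ Matrix.unitaryGroup (Fin 3) ℝ := Matrix.mem_unitaryGroup_iff'.mpr A.2.1
  simpa using entry_norm_bound_of_unitary hA i j

instance : CompactSpace SO3T := by
  refine isCompact_iff_compactSpace.mp (IsCompact.of_isClosed_subset
    (isCompact_univ_pi fun _ => isCompact_univ_pi fun _ => isCompact_Icc (a := (-1 : ℝ)) (b := 1))
    ?_ ?_)
  · exact (isClosed_singleton.preimage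
      (continuous_id.matrix_transpose.matrix_mul continuous_id)).inter
      (isClosed_singleton.preimage continuous_id.matrix_det)
  · rintro A hA i - j -
    exact abs_le.mp (abs_val_apply_le_one ⟨A, hA⟩ i j)

def rotZ : SO3T := ⟨!![0, -1, 0; 1, 0, 0; 0, 0, 1], by
  ext i j; fin_cases i <;> fin_cases j <;> simp [Matrix.mul_apply, Fin.sum_univ_three], by
  simp [Matrix.det_fin_three]⟩

def rotX : SO3T := ⟨!![1, 0, 0; 0, 0, -1; 0, 1, 0], by
  ext i j; fin_cases i <;> fin_cases j <;> simp [Matrix.mul_apply, Fin.sum_univ_three], by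
  simp [Matrix.det_fin_three]⟩

lemma continuous_val_apply (i j : Fin 3) : Continuous fun A : SO3T => A.val i j :=
  (continuous_apply_apply i j).comp continuous_val

lemma trace_conj (g A : SO3T) : (g * A * g⁻¹).val.trace = A.val.trace := by
  rw [val_mul, val_mul, val_inv, Matrix.trace_mul_cycle, g.2.1, Matrix.one_mul]

lemma trace_le_three (A : SO3T) : A.val.trace ≤ 3 := by
  have h (i : Fin 3) := (abs_le.mp (abs_val_apply_le_one A i i)).2
  rw [Matrix.trace_fin_three]
  linarith [h 0, h 1, h 2]

def momentMatrix (μ : Measure SO3T) (φ : SO3T → ℝ) : Mat3 :=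
  Matrix.of fun i j => ∫ A, φ A * A.val i j ∂μ

section Moment

variable {μ : Measure SO3T} [IsFiniteMeasure μ] {φ : SO3T → ℝ}

lemma mul_momentMatrix_mul_apply (hφ : Continuous φ) (M N : Mat3) (i j : Fin 3) :
    (M * momentMatrix μ φ * N) i j = ∫ A, φ A * (M * A.val * N) i j ∂μ := by
  have hint (k l : Fin 3) : Integrable (fun A => M i k * N l j * (φ A * A.val k l)) μ :=
    ((hφ.mul (continuous_val_apply k l)).integrable_of_compactSpace).const_mul _
  simp_rw [Matrix.mul_mul_apply_eq_sum, Finset.mul_sum, mul_left_comm (φ _)]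
  rw [integral_finsetSum _ fun k _ => integrable_finsetSum _ fun l _ => hint k l]
  refine Finset.sum_congr rfl fun k _ => ?_
  rw [integral_finsetSum _ fun l _ => hint k l]
  exact Finset.sum_congr rfl fun l _ => (integral_const_mul _ _).symm

lemma trace_momentMatrix (hφ : Continuous φ) :
    (momentMatrix μ φ).trace = ∫ A, φ A * A.val.trace ∂μ := by
  simp only [Matrix.trace, Matrix.diag, Finset.mul_sum, momentMatrix, Matrix.of_apply]
  exact (integral_finsetSum _ fun i _ =>
    (hφ.mul (continuous_val_apply i i)).integrable_of_compactSpace).symm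

variable [μ.IsMulLeftInvariant]

lemma mul_momentMatrix (hφ : Continuous φ) (Λ : SO3T) :
    Λ.val * momentMatrix μ φ = momentMatrix μ fun A => φ (Λ⁻¹ * A) := by
  ext i j
  calc (Λ.val * momentMatrix μ φ) i j = ∫ A, φ A * (Λ.val * A.val * 1) i j ∂μ := by
        rw [← mul_momentMatrix_mul_apply hφ, Matrix.mul_one]
    _ = ∫ A, φ (Λ⁻¹ * (Λ * A)) * (Λ * A).val i j ∂μ := by simp
    _ = _ := integral_mul_left_eq_self (fun A => φ (Λ⁻¹ * A) * A.val i j) Λ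

variable [μ.IsMulRightInvariant]

lemma commute_momentMatrix (hφ : Continuous φ) (hφ_conj : ∀ g A, φ (g * A * g⁻¹) = φ A)
    (g : SO3T) : Commute g.val (momentMatrix μ φ) := by
  have hconj : g.val * momentMatrix μ φ * g.valᵀ = momentMatrix μ φ := by
    ext i j
    calc (g.val * momentMatrix μ φ * g.valᵀ) i j
        = ∫ A, φ A * (g.val * A.val * g.valᵀ) i j ∂μ := mul_momentMatrix_mul_apply hφ _ _ i j
      _ = ∫ A, φ (g * A * g⁻¹) * (g * A * g⁻¹).val i j ∂μ := by simp [hφ_conj]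
      _ = _ := integral_conj_eq_self (fun A => φ A * A.val i j) g
  rw [Commute, SemiconjBy]
  conv_rhs => rw [← hconj]
  rw [Matrix.mul_assoc _ g.valᵀ, g.2.1, Matrix.mul_one]

lemma momentMatrix_eq_smul_one (hφ : Continuous φ) (hφ_conj : ∀ g A, φ (g * A * g⁻¹) = φ A) :
    momentMatrix μ φ = momentMatrix μ φ 0 0 • 1 :=
  Matrix.eq_smul_one_of_commute_rotations _ (commute_momentMatrix hφ hφ_conj rotZ)
    (commute_momentMatrix hφ hφ_conj rotX)

lemma integral_trace_eq_zero : ∫ A, A.val.trace ∂μ = 0 := by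
  have hM := momentMatrix_eq_smul_one (μ := μ) (φ := fun _ => 1) continuous_const fun _ _ => rfl
  have hrot := congrFun (congrFun
    (mul_momentMatrix (μ := μ) (φ := fun _ => 1) continuous_const rotZ) 1) 0
  -- `∫ A dμ = c • 1` is fixed by left multiplication with `rotZ`, which forces `c = 0`.
  have h00 : momentMatrix μ (fun _ => 1) 0 0 = 0 := by
    rw [hM] at hrot
    simpa [rotZ, Matrix.mul_apply, Fin.sum_univ_three] using hrot
  calc ∫ A, A.val.trace ∂μ = (momentMatrix μ fun _ => 1).trace := by
        rw [trace_momentMatrix continuous_const]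
        simp only [one_mul]
    _ = 0 := by rw [hM, h00, zero_smul, Matrix.trace_zero]

end Moment

/-- `expTrace (1 / (2 * D)) (Λ⁻¹ * A)` is the unnormalised von Mises density `Z M_Λ(A)`. -/
def expTrace (κ : ℝ) (A : SO3T) : ℝ := Real.exp (κ * A.val.trace)

lemma continuous_expTrace (κ : ℝ) : Continuous (expTrace κ) :=
  Real.continuous_exp.comp (continuous_const.mul continuous_val.matrix_trace)

lemma continuous_expTrace_mul_trace (κ : ℝ) :
    Continuous fun A : SO3T => expTrace κ A * A.val.trace :=
  (continuous_expTrace κ).mul continuous_val.matrix_trace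

section VonMises

variable {μ : Measure SO3T} [IsFiniteMeasure μ] [μ.IsMulLeftInvariant]
  [μ.IsMulRightInvariant] {κ : ℝ}

lemma momentMatrix_expTrace_eq_smul_one :
    momentMatrix μ (expTrace κ) = momentMatrix μ (expTrace κ) 0 0 • 1 :=
  momentMatrix_eq_smul_one (continuous_expTrace κ) fun g A => by rw [expTrace, trace_conj]; rfl

lemma integral_expTrace_mul_trace :
    ∫ A, expTrace κ A * A.val.trace ∂μ = 3 * momentMatrix μ (expTrace κ) 0 0 := by
  rw [← trace_momentMatrix (continuous_expTrace κ), momentMatrix_expTrace_eq_smul_one,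
    Matrix.trace_smul, Matrix.trace_one]
  simp [mul_comm]

variable [μ.IsOpenPosMeasure]

lemma momentMatrix_expTrace_pos (hκ : 0 < κ) : 0 < momentMatrix μ (expTrace κ) 0 0 := by
  have hpos : 0 < ∫ A, (expTrace κ A - 1) * A.val.trace ∂μ := by
    refine Continuous.integral_pos_of_hasCompactSupport_nonneg_nonzero (x := 1) ?_
      (.of_compactSpace _) (fun A => Real.exp_mul_sub_one_mul_nonneg hκ.le _) ?_
    · exact ((continuous_expTrace κ).sub continuous_const).mul continuous_val.matrix_trace
    · have h3 : (1 : SO3T).val.trace = 3 := by simp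
      rw [expTrace, h3]
      exact (mul_pos (sub_pos.2 (Real.one_lt_exp_iff.2 (by positivity))) three_pos).ne'
  have hsplit : ∫ A, (expTrace κ A - 1) * A.val.trace ∂μ
      = ∫ A, expTrace κ A * A.val.trace ∂μ - ∫ A, A.val.trace ∂μ := by
    simp_rw [sub_mul, one_mul]
    exact integral_sub (continuous_expTrace_mul_trace κ).integrable_of_compactSpace
      continuous_val.matrix_trace.integrable_of_compactSpace
  rw [hsplit, integral_expTrace_mul_trace, integral_trace_eq_zero] at hpos
  linarith

lemma momentMatrix_expTrace_lt_integral :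
    momentMatrix μ (expTrace κ) 0 0 < ∫ A, expTrace κ A ∂μ := by
  have hpos : 0 < ∫ A, expTrace κ A * (3 - A.val.trace) ∂μ := by
    refine Continuous.integral_pos_of_hasCompactSupport_nonneg_nonzero (x := rotZ) ?_
      (.of_compactSpace _)
      (fun A => mul_nonneg (Real.exp_pos _).le (sub_nonneg.2 (trace_le_three A))) ?_
    · exact (continuous_expTrace κ).mul (continuous_const.sub continuous_val.matrix_trace)
    · have h1 : rotZ.val.trace = 1 := by simp [rotZ, Matrix.trace_fin_three]
      rw [h1]
      exact mul_ne_zero (Real.exp_pos _).ne' (by norm_num)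
  have hsplit : ∫ A, expTrace κ A * (3 - A.val.trace) ∂μ
      = 3 * ∫ A, expTrace κ A ∂μ - ∫ A, expTrace κ A * A.val.trace ∂μ := by
    simp_rw [mul_sub, mul_comm (expTrace κ _) 3]
    rw [integral_sub ((continuous_expTrace κ).integrable_of_compactSpace.const_mul 3)
      (continuous_expTrace_mul_trace κ).integrable_of_compactSpace,
      integral_const_mul]
  rw [hsplit, integral_expTrace_mul_trace] at hpos
  linarith

end VonMises

end SO3T

open SO3T in
/-- Consistency relation: there is a constant `c₁ ∈ (0,1)`, depending only on `D`, such that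
for every `Λ ∈ SO₃(ℝ)` the (entrywise) flux of the von Mises distribution satisfies
`∫ A M_Λ(A) dμ(A) = c₁ Λ`.  Here `μ` is the Haar probability measure of `SO₃(ℝ)`
(characterized by left invariance) and `M_Λ(A) = Z⁻¹ exp(Tr(Λᵀ A)/(2D))`. -/
theorem vonMises_flux_consistency (D : ℝ) (hD : 0 < D)
    (μ : Measure SO3T) [IsProbabilityMeasure μ]
    (hinv : ∀ g : SO3T, μ.map (fun A => g * A) = μ)
    (Z : ℝ) (hZ : Z = ∫ A : SO3T, Real.exp (1 / (2 * D) * Matrix.trace A.val) ∂μ) :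
    ∃ c₁ : ℝ, 0 < c₁ ∧ c₁ < 1 ∧
      ∀ (Λ : SO3T) (i j : Fin 3),
        (∫ A : SO3T,
            (Z⁻¹ * Real.exp (1 / (2 * D) * Matrix.trace ((Λ.val)ᵀ * A.val))) * A.val i j ∂μ)
          = c₁ * Λ.val i j := by
  have : μ.IsMulLeftInvariant := ⟨hinv⟩
  have : μ.IsHaarMeasure := isHaarMeasure_of_isProbabilityMeasure μ
  have : μ.IsMulRightInvariant := isMulRightInvariant_of_isProbabilityMeasure μ
  set κ := 1 / (2 * D)
  set c := momentMatrix μ (expTrace κ) 0 0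
  have hc : 0 < c := momentMatrix_expTrace_pos (by positivity)
  have hcZ : c < Z := hZ ▸ momentMatrix_expTrace_lt_integral
  refine ⟨c / Z, div_pos hc (hc.trans hcZ), (div_lt_one (hc.trans hcZ)).2 hcZ, fun Λ i j => ?_⟩
  calc _ = Z⁻¹ * ∫ A, expTrace κ (Λ⁻¹ * A) * A.val i j ∂μ := by
        simp_rw [mul_assoc]
        exact integral_const_mul _ _
    _ = Z⁻¹ * (Λ.val * momentMatrix μ (expTrace κ)) i j := by
        rw [mul_momentMatrix (continuous_expTrace κ)]
        rfl
    _ = c / Z * Λ.val i j := by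
        rw [momentMatrix_expTrace_eq_smul_one]
        simp only [Matrix.smul_apply, Algebra.mul_smul_comm, mul_one, smul_eq_mul, c]
        ring
end
end

section
/- Fix \(D > 0\) and \(\Lambda_0 \in SO_3(\mathbb{R})\), and let \(\mu\) be the Haar probability measure on \(SO_3(\mathbb{R})\). For \(f \in L^2(\mu)\), define the jump collision operator \(\Gamma_{\Lambda_0}(f) = \big(\int f\,\mathrm{d}\mu\big) M_{\Lambda_0} - f\). Then a function \(\psi \in L^2(\mu)\) satisfies \(\int \Gamma_{\Lambda_0}(f)\,\psi\,\mathrm{d}\mu = 0\) for every \(f \in L^2(\mu)\) such that \(\int f(A)\,\big(\tfrac{1}{2}\mathrm{Tr}(P^\mathsf{T}\Lambda_0^\mathsf{T} A)\big)\,\mathrm{d}\mu(A) = 0\) for all antisymmetric \(P\), if and only if there exists an antisymmetric matrix \(P\) such that, for \(\mu\)-almost every \(A\), \(\big(\int \psi\,M_{\Lambda_0}\,\mathrm{d}\mu\big) - \psi(A) = \tfrac{1}{2}\mathrm{Tr}(P^\mathsf{T}\Lambda_0^\mathsf{T} A)\). -/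
/-!
Expanding the product, `∫ Γ_{Λ₀}(f) ψ dμ = ∫ f φ dμ` with `φ = (∫ ψ M_{Λ₀} dμ) - ψ`. Hence `ψ`
is a collision invariant iff `φ` is orthogonal in `L²(μ)` to the orthogonal complement of
`V = {A ↦ ½ Tr(Pᵀ Λ₀ᵀ A) : P ∈ 𝔰𝔬(3)}`, i.e. iff `φ ∈ Vᗮᗮ`. Since `V` is finite-dimensional it
is closed, so `Vᗮᗮ = V`. All functions involved are continuous on the compact group `SO₃(ℝ)`,
hence in `L²(μ)`.
-/

open scoped Matrix
open MeasureTheory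

noncomputable section

theorem Matrix.abs_apply_le_one_of_transpose_mul_self {n : Type*} [Fintype n] [DecidableEq n]
    {A : Matrix n n ℝ} (hA : Aᵀ * A = 1) (i j : n) : |A i j| ≤ 1 := by
  have hmem : A ∈ Matrix.orthogonalGroup n ℝ := (Matrix.mem_orthogonalGroup_iff' n ℝ).2 hA
  simpa only [Real.norm_eq_abs] using entry_norm_bound_of_unitary (𝕜 := ℝ) hmem i j

instance SO3T.compactSpace : CompactSpace SO3T := by
  have hclosed : IsClosed {A : Mat3 | Aᵀ * A = 1 ∧ A.det = 1} :=
    (isClosed_eq (by fun_prop) continuous_const).inter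
      (isClosed_eq continuous_id.matrix_det continuous_const)
  have hbox : {A : Mat3 | Aᵀ * A = 1 ∧ A.det = 1} ⊆
      Set.univ.pi fun _ => Set.univ.pi fun _ => Set.Icc (-1) 1 :=
    fun A hA i _ j _ => abs_le.1 (Matrix.abs_apply_le_one_of_transpose_mul_self hA.1 i j)
  exact isCompact_iff_compactSpace.1 <|
    (isCompact_univ_pi fun _ => isCompact_univ_pi fun _ => isCompact_Icc).of_isClosed_subset
      hclosed hbox

theorem SO3T.memLp_of_continuous {μ : Measure SO3T} [IsFiniteMeasure μ] {f : SO3T → ℝ}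
    (hf : Continuous f) (p : ENNReal) [Fact (1 ≤ p)] : MemLp f p μ :=
  ContinuousMap.memLp μ ℝ ⟨f, hf⟩

section L2Duality

variable {α E : Type*} [MeasurableSpace α] {μ : Measure α}

theorem MemLp.inner_toLp_eq_integral_mul {f g : α → ℝ} (hf : MemLp f 2 μ) (hg : MemLp g 2 μ) :
    inner ℝ (hf.toLp f) (hg.toLp g) = ∫ a, f a * g a ∂μ := by
  rw [L2.inner_def]
  refine integral_congr_ae ?_
  filter_upwards [hf.coeFn_toLp, hg.coeFn_toLp] with a hfa hga
  simp [hfa, hga, mul_comm]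

variable [AddCommGroup E] [Module ℝ E]

def LinearMap.toL2 (G : E →ₗ[ℝ] α → ℝ) (hG : ∀ x, MemLp (G x) 2 μ) : E →ₗ[ℝ] Lp ℝ 2 μ where
  toFun x := (hG x).toLp (G x)
  map_add' x y :=
    (MemLp.toLp_congr _ ((hG x).add (hG y)) (by rw [map_add])).trans (MemLp.toLp_add _ _)
  map_smul' c x :=
    (MemLp.toLp_congr _ ((hG x).const_smul c) (by rw [map_smul])).trans
      (MemLp.toLp_const_smul _ _)

theorem forall_integral_mul_eq_zero_iff_exists_ae_eq [FiniteDimensional ℝ E] (K : Submodule ℝ E)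
    (G : E →ₗ[ℝ] α → ℝ) (hG : ∀ x, MemLp (G x) 2 μ) {φ : α → ℝ} (hφ : MemLp φ 2 μ) :
    (∀ u : α → ℝ, MemLp u 2 μ → (∀ x ∈ K, ∫ a, u a * G x a ∂μ = 0) → ∫ a, u a * φ a ∂μ = 0) ↔
      ∃ x ∈ K, φ =ᵐ[μ] G x := by
  constructor
  · intro h
    have hmem : hφ.toLp φ ∈ (K.map (G.toL2 hG))ᗮᗮ := by
      refine (Submodule.mem_orthogonal _ _).2 fun u hu => ?_
      rw [← Lp.toLp_coeFn u (Lp.memLp u), MemLp.inner_toLp_eq_integral_mul]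
      refine h u (Lp.memLp u) fun x hx => ?_
      have hux := (Submodule.mem_orthogonal' _ _).1 hu _ (Submodule.mem_map_of_mem hx)
      rwa [← Lp.toLp_coeFn u (Lp.memLp u), LinearMap.toL2, LinearMap.coe_mk, AddHom.coe_mk,
        MemLp.inner_toLp_eq_integral_mul] at hux
    rw [Submodule.orthogonal_orthogonal] at hmem
    obtain ⟨x, hx, hxφ⟩ := hmem
    exact ⟨x, hx, ((MemLp.toLp_eq_toLp_iff (hG x) hφ).1 hxφ).symm⟩
  · rintro ⟨x, hx, hφx⟩ u - hK
    rw [integral_congr_ae (hφx.mono fun a ha => congrArg (u a * ·) ha)]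
    exact hK x hx

theorem integral_jump_mul_eq_integral_mul_sub [IsFiniteMeasure μ] {M ψ f : α → ℝ}
    (hM : MemLp M 2 μ) (hψ : MemLp ψ 2 μ) (hf : MemLp f 2 μ) :
    ∫ a, ((∫ b, f b ∂μ) * M a - f a) * ψ a ∂μ = ∫ a, f a * ((∫ b, ψ b * M b ∂μ) - ψ a) ∂μ := by
  have hψM : Integrable (fun a => ψ a * M a) μ := hψ.integrable_mul hM
  have hfψ : Integrable (fun a => f a * ψ a) μ := hf.integrable_mul hψ
  calc ∫ a, ((∫ b, f b ∂μ) * M a - f a) * ψ a ∂μ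
      = ∫ a, ((∫ b, f b ∂μ) * (ψ a * M a) - f a * ψ a) ∂μ := by congr with a; ring
    _ = (∫ b, f b ∂μ) * (∫ b, ψ b * M b ∂μ) - ∫ a, f a * ψ a ∂μ := by
      rw [integral_sub (hψM.const_mul _) hfψ, integral_const_mul]
    _ = ∫ a, (f a * (∫ b, ψ b * M b ∂μ) - f a * ψ a) ∂μ := by
      rw [integral_sub ((hf.integrable one_le_two).mul_const _) hfψ, integral_mul_const]
    _ = ∫ a, f a * ((∫ b, ψ b * M b ∂μ) - ψ a) ∂μ := by congr with a; ring

end L2Duality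

attribute [local instance] LieRing.ofAssociativeRing

/-- `½ Tr(Pᵀ Λ₀ᵀ A)` is half the Frobenius pairing of `A` with the tangent vector `Λ₀ P`. -/
def SO3T.tangentPairing (Λ0 : SO3T) : Mat3 →ₗ[ℝ] SO3T → ℝ where
  toFun P A := (1 / 2 : ℝ) * Matrix.trace (Pᵀ * (Λ0.val)ᵀ * A.val)
  map_add' P Q := by
    ext A
    simp only [Matrix.transpose_add, Matrix.add_mul, Matrix.trace_add, Pi.add_apply]
    ring
  map_smul' c P := by
    ext A
    simp only [Matrix.transpose_smul, Matrix.smul_mul, Matrix.trace_smul, Pi.smul_apply,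
      smul_eq_mul, RingHom.id_apply]
    ring

theorem SO3T.continuous_tangentPairing (Λ0 : SO3T) (P : Mat3) :
    Continuous (SO3T.tangentPairing Λ0 P) :=
  show Continuous fun A : SO3T => (1 / 2 : ℝ) * Matrix.trace (Pᵀ * (Λ0.val)ᵀ * A.val) by fun_prop

theorem GCI_characterization_jump_model_general (D : ℝ)
    (μ : Measure SO3T) [IsProbabilityMeasure μ]
    (Z : ℝ)
    (Λ0 : SO3T) (ψ : SO3T → ℝ) (hψ : MemLp ψ 2 μ) :
    (∀ f : SO3T → ℝ, MemLp f 2 μ →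
        (∀ P : Mat3, Pᵀ = -P →
          ∫ A, f A * ((1 / 2 : ℝ) * Matrix.trace (Pᵀ * (Λ0.val)ᵀ * A.val)) ∂μ = 0) →
        ∫ A, ((∫ B, f B ∂μ) *
            (Z⁻¹ * Real.exp (1 / (2 * D) * Matrix.trace ((Λ0.val)ᵀ * A.val))) - f A) * ψ A ∂μ
          = 0)
      ↔ ∃ P : Mat3, Pᵀ = -P ∧
          ∀ᵐ A ∂μ,
            (∫ B, ψ B *
                (Z⁻¹ * Real.exp (1 / (2 * D) * Matrix.trace ((Λ0.val)ᵀ * B.val))) ∂μ) - ψ A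
              = (1 / 2 : ℝ) * Matrix.trace (Pᵀ * (Λ0.val)ᵀ * A.val) := by
  set M : SO3T → ℝ := fun A => Z⁻¹ * Real.exp (1 / (2 * D) * Matrix.trace ((Λ0.val)ᵀ * A.val))
  have hM : MemLp M 2 μ := SO3T.memLp_of_continuous (by fun_prop) 2
  have hG (P : Mat3) : MemLp (SO3T.tangentPairing Λ0 P) 2 μ :=
    SO3T.memLp_of_continuous (SO3T.continuous_tangentPairing Λ0 P) 2
  have duality := forall_integral_mul_eq_zero_iff_exists_ae_eq
    (LieAlgebra.Orthogonal.so (Fin 3) ℝ).toSubmodule (SO3T.tangentPairing Λ0) hG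
    (φ := fun A => (∫ B, ψ B * M B ∂μ) - ψ A) ((memLp_const _).sub hψ)
  simp only [LieSubalgebra.mem_toSubmodule, LieAlgebra.Orthogonal.mem_so] at duality
  refine Iff.trans ?_ duality
  refine forall_congr' fun f => forall_congr' fun hf => ?_
  rw [integral_jump_mul_eq_integral_mul_sub hM hψ hf]
  rfl

/-- Characterization of the Generalized Collision Invariants of the jump collision operator
`Γ_{Λ₀}(f) = (∫ f dμ) M_{Λ₀} - f`: a function `ψ ∈ L²(μ)` is a GCI associated with
`Λ₀ ∈ SO₃(ℝ)` (i.e. `∫ Γ_{Λ₀}(f) ψ dμ = 0` for all `f ∈ L²(μ)` whose flux `∫ A f dμ` is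
orthogonal to the tangent space at `Λ₀`) if and only if there is an antisymmetric matrix `P`
such that `(∫ ψ M_{Λ₀} dμ) - ψ(A) = ½ Tr(Pᵀ Λ₀ᵀ A)` for `μ`-a.e. `A`.  Here `μ` is the Haar
probability measure of `SO₃(ℝ)` (characterized by left invariance) and
`M_Λ(A) = Z⁻¹ exp(Tr(Λᵀ A)/(2D))`. -/
theorem GCI_characterization_jump_model (D : ℝ) (hD : 0 < D)
    (μ : Measure SO3T) [IsProbabilityMeasure μ]
    (hinv : ∀ g : SO3T, μ.map (fun A => g * A) = μ)
    (Z : ℝ) (hZ : Z = ∫ A : SO3T, Real.exp (1 / (2 * D) * Matrix.trace A.val) ∂μ)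
    (Λ0 : SO3T) (ψ : SO3T → ℝ) (hψ : MemLp ψ 2 μ) :
    (∀ f : SO3T → ℝ, MemLp f 2 μ →
        (∀ P : Mat3, Pᵀ = -P →
          ∫ A, f A * ((1 / 2 : ℝ) * Matrix.trace (Pᵀ * (Λ0.val)ᵀ * A.val)) ∂μ = 0) →
        ∫ A, ((∫ B, f B ∂μ) *
            (Z⁻¹ * Real.exp (1 / (2 * D) * Matrix.trace ((Λ0.val)ᵀ * A.val))) - f A) * ψ A ∂μ
          = 0)
      ↔ ∃ P : Mat3, Pᵀ = -P ∧
          ∀ᵐ A ∂μ,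
            (∫ B, ψ B *
                (Z⁻¹ * Real.exp (1 / (2 * D) * Matrix.trace ((Λ0.val)ᵀ * B.val))) ∂μ) - ψ A
              = (1 / 2 : ℝ) * Matrix.trace (Pᵀ * (Λ0.val)ᵀ * A.val) :=
  GCI_characterization_jump_model_general D μ Z Λ0 ψ hψ
end
end
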